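/- arXiv:1310.4917 — 2 statements merged into one kernel-verified Lean document; each statement's English description precedes it below -/
import Mathlib

section
/- The d_•-pullback attractor A_•(t) exists if and only if Ω_•(X,t) is a d_•-pullback attracting family of sets. -/
open Filter Topology MeasureTheory

variable {X : Type*}

/-- Convergence of a sequence with respect to a distance function `d`. -/
def Conv (d : X → X → ℝ) (u : ℕ → X) (x : X) : Prop :=
  ∀ ε > 0, ∃ N, ∀ n ≥ N, d (u n) x < ε

/-- The `d`-distance between two paired sequences tends to zero. -/
def DistTendsZero (d : X → X → ℝ) (u v : ℕ → X) : Prop :=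
  ∀ ε > 0, ∃ N, ∀ n ≥ N, d (u n) (v n) < ε

/-- Sequential closure of a set with respect to the distance `d`. -/
def SeqClosure (d : X → X → ℝ) (A : Set X) : Set X :=
  {x | ∃ u : ℕ → X, (∀ n, u n ∈ A) ∧ Conv d u x}

/-- Sequential closedness with respect to the distance `d`. -/
def SeqClosed (d : X → X → ℝ) (A : Set X) : Prop :=
  SeqClosure d A ⊆ A

/-- Sequential compactness of a set with respect to the distance `d`. -/
def SeqCompactIn (d : X → X → ℝ) (A : Set X) : Prop :=
  ∀ u : ℕ → X, (∀ n, u n ∈ A) →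
    ∃ x ∈ A, ∃ φ : ℕ → ℕ, StrictMono φ ∧ Conv d (u ∘ φ) x

/-- `d` is a metric on `X`. -/
def IsMetric (d : X → X → ℝ) : Prop :=
  (∀ x y, 0 ≤ d x y) ∧ (∀ x y, d x y = 0 ↔ x = y) ∧ (∀ x y, d x y = d y x) ∧
  (∀ x y z, d x z ≤ d x y + d y z)

/-- Uniform convergence of trajectories on each compact subinterval `[s,T]`,
i.e. convergence in `C([s,∞);X)` with distance `d` on `X`. -/
def ConvTraj (d : X → X → ℝ) (s : ℝ) (u : ℕ → ℝ → X) (v : ℝ → X) : Prop :=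
  ∀ T : ℝ, ∀ ε > 0, ∃ N, ∀ n ≥ N, ∀ r ∈ Set.Icc s T, d (u n r) (v r) < ε

/-- A generalized evolutionary system: to each interval `[s,∞)` it assigns a
nonempty set of trajectories (encoded as functions `ℝ → X`, only the values on
`[s,∞)` being relevant), closed under restriction to later starting times. -/
structure GES (X : Type*) where
  traj : ℝ → Set (ℝ → X)
  nonempty : ∀ s : ℝ, (traj s).Nonempty
  mono : ∀ ⦃s s' : ℝ⦄, s ≤ s' → traj s ⊆ traj s'

namespace GES

variable (E : GES X)

/-- Complete trajectories: those whose restriction to every `[T,∞)` is a trajectory. -/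
def complete : Set (ℝ → X) := {u | ∀ T : ℝ, u ∈ E.traj T}

/-- `P(t,s)A = {u(t) : u ∈ E([s,∞)), u(s) ∈ A}`. -/
def P (t s : ℝ) (A : Set X) : Set X :=
  {x | ∃ u ∈ E.traj s, u s ∈ A ∧ u t = x}

/-- `P̃(t,s)A = {u(t) : u ∈ E((-∞,∞)), u(s) ∈ A}`. -/
def Ptil (t s : ℝ) (A : Set X) : Set X :=
  {x | ∃ u ∈ E.complete, u s ∈ A ∧ u t = x}

/-- The pullback omega-limit `Ω_d(A,t) = ⋂_{s≤t} cl_d(⋃_{r≤s} P(t,r)A)`. -/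
def Omega (d : X → X → ℝ) (A : Set X) (t : ℝ) : Set X :=
  ⋂ s ∈ Set.Iic t, SeqClosure d (⋃ r ∈ Set.Iic s, E.P t r A)

/-- The family `Afam` pullback attracts the set `B` in the metric `d`. -/
def PullbackAttracts (d : X → X → ℝ) (Afam : ℝ → Set X) (B : Set X) : Prop :=
  ∀ t : ℝ, ∀ ε > 0, ∃ s0 ≤ t, ∀ s ≤ s0, ∀ x ∈ E.P t s B, ∃ a ∈ Afam t, d x a < ε

/-- The `d`-pullback attractor: a family of `d`-closed, `d`-pullback attracting
sets which is minimal with respect to these properties. -/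
def IsPullbackAttractor (d : X → X → ℝ) (Afam : ℝ → Set X) : Prop :=
  (∀ t, SeqClosed d (Afam t)) ∧ E.PullbackAttracts d Afam Set.univ ∧
  ∀ B : ℝ → Set X, (∀ t, SeqClosed d (B t)) → E.PullbackAttracts d B Set.univ →
    ∀ t, Afam t ⊆ B t

/-- Pullback asymptotic compactness with respect to `d`. -/
def PullbackAsympCompact (d : X → X → ℝ) : Prop :=
  ∀ t : ℝ, ∀ s : ℕ → ℝ, (∀ n, s n ≤ t) → Tendsto s atTop atBot →
    ∀ x : ℕ → X, (∀ n, x n ∈ E.P t (s n) Set.univ) →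
      ∃ y : X, ∃ φ : ℕ → ℕ, StrictMono φ ∧ Conv d (x ∘ φ) y

/-- Pullback semi-invariance. -/
def PBSemiInv (B : ℝ → Set X) : Prop :=
  ∀ ⦃s t : ℝ⦄, s ≤ t → E.Ptil t s (B s) ⊆ B t

/-- Pullback invariance. -/
def PBInv (B : ℝ → Set X) : Prop :=
  ∀ ⦃s t : ℝ⦄, s ≤ t → E.Ptil t s (B s) = B t

/-- Pullback quasi-invariance. -/
def PBQuasiInv (B : ℝ → Set X) : Prop :=
  ∀ t : ℝ, ∀ b ∈ B t, ∃ u ∈ E.complete, u t = b ∧ ∀ s ≤ t, u s ∈ B s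

/-- Condition A1: `E([s,∞))` is compact in `C([s,∞);X_w)` for each `s`. -/
def A1 (d : X → X → ℝ) : Prop :=
  ∀ s : ℝ, ∀ u : ℕ → ℝ → X, (∀ n, u n ∈ E.traj s) →
    ∃ v ∈ E.traj s, ∃ φ : ℕ → ℕ, StrictMono φ ∧ ConvTraj d s (fun n => u (φ n)) v

end GES

/-!
Two inclusions drive the proof. Every `d`-closed pullback attracting family `B` contains
`Ω(X, t)`: a point of `Ω(X, t)` is a limit of points `P(t, r) X` with `r` arbitrarily
negative, and these are eventually close to `B t`. Conversely, for fixed `s` the closed tails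
`t ↦ cl(⋃_{r ≤ min s t} P(t, r) X)` form a closed family that trivially attracts, so a minimal
one is contained in each of them, hence in `Ω(X, t)`. Thus the attractor, when it exists, is
`Ω(X, ·)`.
-/

open Set

section SeqClosure

variable {d : X → X → ℝ} {A B : Set X} {x : X}

lemma exists_mem_lt_of_mem_seqClosure (hx : x ∈ SeqClosure d A) {ε : ℝ} (hε : 0 < ε) :
    ∃ a ∈ A, d a x < ε := by
  obtain ⟨u, hu, hconv⟩ := hx
  obtain ⟨N, hN⟩ := hconv ε hε
  exact ⟨u N, hu N, hN N le_rfl⟩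

lemma mem_seqClosure_of_forall_exists_lt (h : ∀ ε > 0, ∃ a ∈ A, d a x < ε) :
    x ∈ SeqClosure d A := by
  choose a ha hdist using fun n : ℕ => h (1 / (n + 1)) Nat.one_div_pos_of_nat
  refine ⟨a, ha, fun ε hε => ?_⟩
  obtain ⟨N, hN⟩ := exists_nat_one_div_lt hε
  refine ⟨N, fun n hn => (hdist n).trans_le (hN.le.trans' ?_)⟩
  gcongr

lemma IsMetric.subset_seqClosure (hd : IsMetric d) (A : Set X) : A ⊆ SeqClosure d A :=
  fun x hx => mem_seqClosure_of_forall_exists_lt fun _ hε =>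
    ⟨x, hx, by rwa [(hd.2.1 x x).2 rfl]⟩

lemma IsMetric.seqClosed_seqClosure (hd : IsMetric d) (A : Set X) :
    SeqClosed d (SeqClosure d A) := by
  rintro x ⟨u, hu, hconv⟩
  refine mem_seqClosure_of_forall_exists_lt fun ε hε => ?_
  obtain ⟨N, hN⟩ := hconv (ε / 2) (half_pos hε)
  obtain ⟨a, ha, hau⟩ := exists_mem_lt_of_mem_seqClosure (hu N) (half_pos hε)
  refine ⟨a, ha, ?_⟩
  calc d a x ≤ d a (u N) + d (u N) x := hd.2.2.2 _ _ _
    _ < ε / 2 + ε / 2 := add_lt_add hau (hN N le_rfl)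
    _ = ε := add_halves ε

lemma seqClosed_iInter {ι : Sort*} {A : ι → Set X} (hA : ∀ i, SeqClosed d (A i)) :
    SeqClosed d (⋂ i, A i) := by
  rintro x ⟨u, hu, hconv⟩
  exact mem_iInter.2 fun i => hA i ⟨u, fun n => mem_iInter.1 (hu n) i, hconv⟩

lemma SeqClosed.mem_of_forall_exists_lt (hd : IsMetric d) (hB : SeqClosed d B)
    (h : ∀ ε > 0, ∃ b ∈ B, d x b < ε) : x ∈ B :=
  hB <| mem_seqClosure_of_forall_exists_lt fun ε hε =>
    let ⟨b, hb, hxb⟩ := h ε hε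
    ⟨b, hb, by rwa [hd.2.2.1]⟩

end SeqClosure

namespace GES

variable (E : GES X) {d : X → X → ℝ}

lemma seqClosed_omega (hd : IsMetric d) (A : Set X) (t : ℝ) :
    SeqClosed d (E.Omega d A t) :=
  seqClosed_iInter fun _ => seqClosed_iInter fun _ => hd.seqClosed_seqClosure _

variable {E}

lemma PullbackAttracts.mono {A A' : ℝ → Set X} {B : Set X} (hA : E.PullbackAttracts d A B)
    (hAA' : ∀ t, A t ⊆ A' t) : E.PullbackAttracts d A' B := by
  intro t ε hε
  obtain ⟨s₀, hs₀t, hs₀⟩ := hA t ε hε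
  refine ⟨s₀, hs₀t, fun s hs x hx => ?_⟩
  obtain ⟨a, ha, hxa⟩ := hs₀ s hs x hx
  exact ⟨a, hAA' t ha, hxa⟩

lemma pullbackAttracts_of_P_subset (hd : IsMetric d) {A : ℝ → Set X} {B : Set X}
    (h : ∀ t, ∃ s₀ ≤ t, ∀ s ≤ s₀, E.P t s B ⊆ A t) : E.PullbackAttracts d A B := by
  intro t ε hε
  obtain ⟨s₀, hs₀t, hs₀⟩ := h t
  exact ⟨s₀, hs₀t, fun s hs x hx => ⟨x, hs₀ s hs hx, by rwa [(hd.2.1 x x).2 rfl]⟩⟩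

lemma omega_subset_of_pullbackAttracts (hd : IsMetric d) {B : ℝ → Set X}
    (hBclosed : ∀ t, SeqClosed d (B t)) (hB : E.PullbackAttracts d B univ) (t : ℝ) :
    E.Omega d univ t ⊆ B t := by
  intro x hx
  refine (hBclosed t).mem_of_forall_exists_lt hd fun ε hε => ?_
  obtain ⟨s₀, hs₀t, hs₀⟩ := hB t (ε / 2) (half_pos hε)
  obtain ⟨y, hy, hyx⟩ :=
    exists_mem_lt_of_mem_seqClosure (mem_iInter₂.1 hx s₀ hs₀t) (half_pos hε)
  obtain ⟨r, hr, hyr⟩ := mem_iUnion₂.1 hy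
  obtain ⟨b, hb, hyb⟩ := hs₀ r hr y hyr
  refine ⟨b, hb, ?_⟩
  calc d x b ≤ d x y + d y b := hd.2.2.2 _ _ _
    _ < ε / 2 + ε / 2 := add_lt_add (by rwa [hd.2.2.1]) hyb
    _ = ε := add_halves ε

lemma IsPullbackAttractor.subset_omega (hd : IsMetric d) {A : ℝ → Set X}
    (hA : E.IsPullbackAttractor d A) (t : ℝ) : A t ⊆ E.Omega d univ t := by
  refine subset_iInter₂ fun s (hst : s ≤ t) => ?_
  let tail : ℝ → Set X := fun t' => SeqClosure d (⋃ r ∈ Iic (min s t'), E.P t' r univ)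
  have htail : E.PullbackAttracts d tail univ :=
    pullbackAttracts_of_P_subset hd fun t' => ⟨min s t', min_le_right s t', fun r hr =>
      (subset_biUnion_of_mem (u := fun r => E.P t' r univ) (mem_Iic.2 hr)).trans
        (hd.subset_seqClosure _)⟩
  simpa only [tail, min_eq_left hst] using
    hA.2.2 tail (fun _ => hd.seqClosed_seqClosure _) htail t

lemma isPullbackAttractor_omega (hd : IsMetric d)
    (hΩ : E.PullbackAttracts d (E.Omega d univ) univ) :
    E.IsPullbackAttractor d (E.Omega d univ) :=
  ⟨E.seqClosed_omega hd univ, hΩ, fun _ hBclosed hB =>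
    omega_subset_of_pullbackAttracts hd hBclosed hB⟩

end GES

/-- the `d`-pullback attractor exists iff `Ω_d(X,t)` is a
`d`-pullback attracting family of sets. -/
theorem stmt5 {X : Type*} (E : GES X) (d : X → X → ℝ) (hd : IsMetric d) :
    (∃ Afam : ℝ → Set X, E.IsPullbackAttractor d Afam) ↔
      E.PullbackAttracts d (fun t => E.Omega d Set.univ t) Set.univ :=
  ⟨fun ⟨_, hA⟩ => hA.2.1.mono (hA.subset_omega hd),
    fun hΩ => ⟨_, GES.isPullbackAttractor_omega hd hΩ⟩⟩
end

section
/- If E is pullback asymptotically compact and A ⊆ X is such that for each t and r ≤ t there is u ∈ E([r,∞)) with u(t) ∈ A, then Ω_s(A,t) is a nonempty strongly compact set that strongly pullback attracts A, and Ω_s(A,t) = Ω_w(A,t). -/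
open Filter Topology MeasureTheory

variable {X : Type*}

/-! Points of `Ω_d(A,t)` are exactly the `d`-limits of sequences `x n ∈ P(t, s n) A` with
`s n → -∞`, and pullback asymptotic compactness gives every such sequence a strongly convergent
subsequence whose limit again lies in `Ω_s(A,t)`. Compactness follows by approximating a sequence
in `Ω_s(A,t)` by such a pullback sequence, attraction by contradiction. For `Ω_w ⊆ Ω_s`, a
weakly convergent pullback sequence has a strongly convergent subsequence, and its strong limit
is also a weak limit, hence equal to the weak one. -/

section Convergence

variable {d : X → X → ℝ} {u v : ℕ → X} {x y : X}

theorem DistTendsZero.comp_strictMono (h : DistTendsZero d u v) {φ : ℕ → ℕ}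
    (hφ : StrictMono φ) : DistTendsZero d (u ∘ φ) (v ∘ φ) := fun ε hε => by
  obtain ⟨N, hN⟩ := h ε hε
  exact ⟨N, fun n hn => hN (φ n) (hn.trans hφ.le_apply)⟩

-- `Conv d u x` is, by definition, `DistTendsZero d u (fun _ => x)`.
theorem Conv.comp_strictMono (h : Conv d u x) {φ : ℕ → ℕ} (hφ : StrictMono φ) :
    Conv d (u ∘ φ) x :=
  DistTendsZero.comp_strictMono h hφ

theorem distTendsZero_of_lt_one_div (h : ∀ n : ℕ, d (u n) (v n) < 1 / (n + 1)) :
    DistTendsZero d u v := fun ε hε => by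
  obtain ⟨N, hN⟩ := exists_nat_one_div_lt hε
  refine ⟨N, fun n hn => (h n).trans_le (le_trans ?_ hN.le)⟩
  gcongr

theorem Conv.of_distTendsZero (hd : IsMetric d) (hv : Conv d v x) (hvu : DistTendsZero d v u) :
    Conv d u x := fun ε hε => by
  obtain ⟨N₁, hN₁⟩ := hvu (ε / 2) (half_pos hε)
  obtain ⟨N₂, hN₂⟩ := hv (ε / 2) (half_pos hε)
  refine ⟨max N₁ N₂, fun n hn => ?_⟩
  calc d (u n) x ≤ d (v n) (u n) + d (v n) x := hd.2.2.1 (v n) (u n) ▸ hd.2.2.2 _ _ _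
    _ < ε / 2 + ε / 2 :=
      add_lt_add (hN₁ n (le_of_max_le_left hn)) (hN₂ n (le_of_max_le_right hn))
    _ = ε := add_halves ε

theorem Conv.unique (hd : IsMetric d) (hx : Conv d u x) (hy : Conv d u y) : x = y := by
  refine (hd.2.1 x y).1 (le_antisymm (le_of_forall_pos_lt_add fun ε hε => ?_) (hd.1 x y))
  obtain ⟨N₁, hN₁⟩ := hx (ε / 2) (half_pos hε)
  obtain ⟨N₂, hN₂⟩ := hy (ε / 2) (half_pos hε)
  set n := max N₁ N₂
  calc d x y ≤ d (u n) x + d (u n) y := hd.2.2.1 (u n) x ▸ hd.2.2.2 _ _ _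
    _ < ε / 2 + ε / 2 := add_lt_add (hN₁ n (le_max_left _ _)) (hN₂ n (le_max_right _ _))
    _ = 0 + ε := by ring

end Convergence

namespace GES

variable (E : GES X) {d : X → X → ℝ} {A : Set X} {t : ℝ}

theorem P_mono {s : ℝ} {B : Set X} (h : A ⊆ B) : E.P t s A ⊆ E.P t s B :=
  fun _ ⟨u, hu, huA, hut⟩ => ⟨u, hu, h huA, hut⟩

theorem mem_omega_of_conv {s : ℕ → ℝ} (hs : Tendsto s atTop atBot) {x : ℕ → X}
    (hx : ∀ n, x n ∈ E.P t (s n) A) {y : X} (hxy : Conv d x y) : y ∈ E.Omega d A t := by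
  refine Set.mem_iInter₂.2 fun s₀ _ => ?_
  obtain ⟨N, hN⟩ := eventually_atTop.1 (hs.eventually_le_atBot s₀)
  refine ⟨fun k => x (k + N), fun k => ?_, hxy.comp_strictMono (add_left_strictMono (a := N))⟩
  exact Set.mem_biUnion (x := s (k + N)) (hN _ (Nat.le_add_left N k)) (hx (k + N))

theorem exists_mem_P_lt_of_mem_omega {y : X} (hy : y ∈ E.Omega d A t) {s : ℝ} (hs : s ≤ t)
    {ε : ℝ} (hε : 0 < ε) : ∃ r ≤ s, ∃ z ∈ E.P t r A, d z y < ε := by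
  obtain ⟨v, hv, hvy⟩ := Set.mem_iInter₂.1 hy s hs
  obtain ⟨N, hN⟩ := hvy ε hε
  obtain ⟨r, hr, hz⟩ := Set.mem_iUnion₂.1 (hv N)
  exact ⟨r, hr, v N, hz, hN N le_rfl⟩

theorem exists_seq_distTendsZero_of_forall_mem_omega {u : ℕ → X}
    (hu : ∀ n, u n ∈ E.Omega d A t) : ∃ s : ℕ → ℝ, (∀ n : ℕ, s n ≤ t - n) ∧
      ∃ z : ℕ → X, (∀ n, z n ∈ E.P t (s n) A) ∧ DistTendsZero d z u := by
  choose s hs z hz hzu using fun n : ℕ =>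
    E.exists_mem_P_lt_of_mem_omega (hu n) (sub_le_self t n.cast_nonneg) n.one_div_pos_of_nat
  exact ⟨s, hs, z, hz, distTendsZero_of_lt_one_div hzu⟩

theorem tendsto_atBot_of_le_sub_nat {s : ℕ → ℝ} (hs : ∀ n : ℕ, s n ≤ t - n) :
    Tendsto s atTop atBot :=
  tendsto_atBot_mono (fun n => (hs n).trans_eq (sub_eq_add_neg t n))
    (tendsto_atBot_add_const_left _ t (tendsto_neg_atTop_atBot.comp tendsto_natCast_atTop_atTop))

variable {E}

theorem PullbackAsympCompact.exists_subseq_conv_mem_omega (hpac : E.PullbackAsympCompact d)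
    {s : ℕ → ℝ} (hs : ∀ n : ℕ, s n ≤ t - n) {x : ℕ → X}
    (hx : ∀ n, x n ∈ E.P t (s n) A) :
    ∃ y ∈ E.Omega d A t, ∃ φ : ℕ → ℕ, StrictMono φ ∧ Conv d (x ∘ φ) y := by
  have hs_bot := tendsto_atBot_of_le_sub_nat hs
  obtain ⟨y, φ, hφ, hxy⟩ := hpac t s (fun n => (hs n).trans (sub_le_self t n.cast_nonneg))
    hs_bot x (fun n => E.P_mono (Set.subset_univ A) (hx n))
  exact ⟨y, E.mem_omega_of_conv (hs_bot.comp hφ.tendsto_atTop) (fun n => hx (φ n)) hxy,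
    φ, hφ, hxy⟩

theorem omega_nonempty (hpac : E.PullbackAsympCompact d)
    (hA : ∀ t r : ℝ, r ≤ t → ∃ u ∈ E.traj r, u t ∈ A) : (E.Omega d A t).Nonempty := by
  choose u hu huA using fun n : ℕ => hA (t - n) (t - n) le_rfl
  obtain ⟨y, hy, -⟩ := hpac.exists_subseq_conv_mem_omega
    (fun _ => le_rfl) (fun n => ⟨u n, hu n, huA n, rfl⟩)
  exact ⟨y, hy⟩

theorem seqCompactIn_omega (hd : IsMetric d) (hpac : E.PullbackAsympCompact d) :
    SeqCompactIn d (E.Omega d A t) := by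
  intro u hu
  obtain ⟨s, hs, z, hz, hzu⟩ := E.exists_seq_distTendsZero_of_forall_mem_omega hu
  obtain ⟨y, hy, φ, hφ, hzy⟩ := hpac.exists_subseq_conv_mem_omega hs hz
  exact ⟨y, hy, φ, hφ, hzy.of_distTendsZero hd (hzu.comp_strictMono hφ)⟩

theorem omega_attracts (hpac : E.PullbackAsympCompact d) :
    ∀ ε > 0, ∃ s₀ ≤ t, ∀ s ≤ s₀, ∀ x ∈ E.P t s A,
      ∃ a ∈ E.Omega d A t, d x a < ε := by
  intro ε hε
  by_contra! hfar
  choose s hs x hx hxε using fun n : ℕ => hfar (t - n) (sub_le_self t n.cast_nonneg)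
  obtain ⟨y, hy, φ, -, hxy⟩ := hpac.exists_subseq_conv_mem_omega hs hx
  obtain ⟨N, hN⟩ := hxy ε hε
  exact (hN N le_rfl).not_ge (hxε (φ N) y hy)

theorem omega_subset_omega {d' : X → X → ℝ}
    (H : ∀ u v : ℕ → X, DistTendsZero d u v → DistTendsZero d' u v) :
    E.Omega d A t ⊆ E.Omega d' A t :=
  Set.iInter₂_mono fun _ _ _ ⟨u, hu, hux⟩ => ⟨u, hu, H u _ hux⟩

theorem omega_eq_omega_of_pullbackAsympCompact {ds dw : X → X → ℝ} (hdw : IsMetric dw)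
    (H : ∀ u v : ℕ → X, DistTendsZero ds u v → DistTendsZero dw u v)
    (hpac : E.PullbackAsympCompact ds) : E.Omega ds A t = E.Omega dw A t := by
  refine (omega_subset_omega H).antisymm fun y hy => ?_
  obtain ⟨s, hs, x, hx, hxy⟩ :=
    E.exists_seq_distTendsZero_of_forall_mem_omega (u := fun _ => y) fun _ => hy
  obtain ⟨z, hz, φ, hφ, hxz⟩ := hpac.exists_subseq_conv_mem_omega hs hx
  have hyz : y = z := Conv.unique hdw (Conv.comp_strictMono hxy hφ) (H _ _ hxz)
  exact hyz ▸ hz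

end GES

theorem stmt8_general {X : Type*} (E : GES X) (ds dw : X → X → ℝ)
    (hds : IsMetric ds) (hdw : IsMetric dw)
    (H : ∀ u v : ℕ → X, DistTendsZero ds u v → DistTendsZero dw u v)
    (hpac : E.PullbackAsympCompact ds)
    (A : Set X) (hA : ∀ t r : ℝ, r ≤ t → ∃ u ∈ E.traj r, u t ∈ A) (t : ℝ) :
    (E.Omega ds A t).Nonempty ∧ SeqCompactIn ds (E.Omega ds A t) ∧
    (∀ ε > 0, ∃ s0 ≤ t, ∀ s ≤ s0, ∀ x ∈ E.P t s A,
      ∃ a ∈ E.Omega ds A t, ds x a < ε) ∧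
    E.Omega ds A t = E.Omega dw A t :=
  ⟨GES.omega_nonempty hpac hA, GES.seqCompactIn_omega hds hpac, GES.omega_attracts hpac,
    GES.omega_eq_omega_of_pullbackAsympCompact hdw H hpac⟩

/-- if `E` is pullback asymptotically compact and trajectories
pass through `A` at every time, then `Ω_s(A,t)` is nonempty, strongly compact,
strongly pullback attracts `A`, and `Ω_s(A,t) = Ω_w(A,t)`. -/
theorem stmt8 {X : Type*} (E : GES X) (ds dw : X → X → ℝ)
    (hds : IsMetric ds) (hdw : IsMetric dw)
    (hcompact : SeqCompactIn dw (Set.univ : Set X))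
    (H : ∀ u v : ℕ → X, DistTendsZero ds u v → DistTendsZero dw u v)
    (hpac : E.PullbackAsympCompact ds)
    (A : Set X) (hA : ∀ t r : ℝ, r ≤ t → ∃ u ∈ E.traj r, u t ∈ A) (t : ℝ) :
    (E.Omega ds A t).Nonempty ∧ SeqCompactIn ds (E.Omega ds A t) ∧
    (∀ ε > 0, ∃ s0 ≤ t, ∀ s ≤ s0, ∀ x ∈ E.P t s A,
      ∃ a ∈ E.Omega ds A t, ds x a < ε) ∧
    E.Omega ds A t = E.Omega dw A t :=
  stmt8_general E ds dw hds hdw H hpac A hA t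
end
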